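/- Let L be a field, V a finite-dimensional L-vector space with an endomorphism φ, and let P(T) ∈ L[T] with P(0) ≠ 0 (so P ∈ L^× + T·L[T] up to scalar). Suppose P_{1+j}(T) := P(p^{1+j}T) admits a decomposition P_{1+j}(xy) = P_{1+j}(x)·y + (1 - b·x²y)(1 - y) as an identity in L[x,y], where b ∈ L. Then for ξ, ζ in finite-dimensional L-vector spaces with invertible endomorphisms φ (with φ⊗φ acting as p^{-1} under a pairing ev), and P_{1+j}(φ)ξ = 0, one has ev(ξ ⊗ ζ) = P_{1+j}(p^{-1})^{-1} · ev(ξ ⊗ (1 - (b/p²)φ^{-1})(1 - φ)ζ), provided P_{1+j}(p^{-1}) ≠ 0. -/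

import Mathlib

/-!
Put `x = φ ⊗ 1` and `y = 1 ⊗ φ`: they commute and `x y = φ ⊗ φ`, so the identity in `L[x, y]`
evaluates to `P(φ ⊗ φ) = P(φ) ⊗ φ + (1 - b x² y)(1 - y)` on `V₁ ⊗ V₂`. Applied to `ξ ⊗ ζ` the first
term dies because `P(φ) ξ = 0`. Under `ev`, the left side becomes `P(p⁻¹) ev(ξ ⊗ ζ)`, and since
`x² y = (φ ⊗ φ)² (1 ⊗ φ⁻¹)`, the operator `b x² y` becomes `(b / p²) (1 ⊗ φ⁻¹)`.
-/

open Polynomial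
open scoped TensorProduct

namespace MvPolynomial

open scoped IsMulCommutative

variable {R A σ : Type*} [CommRing R] [Ring A] [Algebra R A]

noncomputable def aevalOfCommute (x : σ → A) (hx : ∀ i j, Commute (x i) (x j)) :
    MvPolynomial σ R →ₐ[R] A :=
  haveI := Algebra.isMulCommutative_adjoin R (s := Set.range x) (by
    rintro _ ⟨i, rfl⟩ _ ⟨j, rfl⟩; exact hx i j)
  (Algebra.adjoin R (Set.range x)).val.comp
    (aeval fun i ↦ ⟨x i, Algebra.subset_adjoin ⟨i, rfl⟩⟩)

@[simp]
theorem aevalOfCommute_X (x : σ → A) (hx : ∀ i j, Commute (x i) (x j)) (i : σ) :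
    aevalOfCommute (R := R) x hx (X i) = x i := by
  simp [aevalOfCommute]

end MvPolynomial

theorem Commute.aeval_mul_of_bivariate_identity {R A : Type*} [CommRing R] [Ring A]
    [Algebra R A] {x y : A} (hxy : Commute x y) (Q : R[X]) (b : R)
    (hQ : aeval (MvPolynomial.X 0 * MvPolynomial.X 1 : MvPolynomial (Fin 2) R) Q =
      aeval (MvPolynomial.X 0 : MvPolynomial (Fin 2) R) Q * MvPolynomial.X 1 +
        (1 - MvPolynomial.C b * MvPolynomial.X 0 ^ 2 * MvPolynomial.X 1) *
          (1 - MvPolynomial.X 1)) :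
    aeval (x * y) Q = aeval x Q * y + (1 - algebraMap R A b * x ^ 2 * y) * (1 - y) := by
  have hcomm : ∀ i j, Commute (![x, y] i) (![x, y] j) := by
    intro i j; fin_cases i <;> fin_cases j <;> simp [hxy, hxy.symm]
  simpa [← aeval_algHom_apply] using congrArg (MvPolynomial.aevalOfCommute ![x, y] hcomm) hQ

theorem LinearMap.apply_aeval_of_apply_eq_smul {R M N : Type*} [CommRing R] [AddCommGroup M]
    [Module R M] [AddCommGroup N] [Module R N] (f : M →ₗ[R] N) (T : Module.End R M) (c : R)
    (hT : ∀ v, f (T v) = c • f v) (Q : R[X]) (v : M) :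
    f (aeval T Q v) = Q.eval c • f v := by
  induction Q using Polynomial.induction_on generalizing v with
  | C a => simp
  | add Q₁ Q₂ h₁ h₂ => simp [h₁, h₂, add_smul]
  | monomial n a ih =>
    rw [pow_succ, ← mul_assoc, map_mul, aeval_X, Module.End.mul_apply, ih, hT, smul_smul,
      eval_mul_X]

theorem LinearMap.eval_mul_apply_of_bivariate_identity {R M : Type*} [CommRing R]
    [AddCommGroup M] [Module R M] (ev : M →ₗ[R] R) {x y y' : Module.End R M}
    (hxy : Commute x y) (hyy' : y * y' = 1) (c : R) (hev : ∀ w, ev ((x * y) w) = c * ev w)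
    (Q : R[X]) (b : R)
    (hQ : aeval (MvPolynomial.X 0 * MvPolynomial.X 1 : MvPolynomial (Fin 2) R) Q =
      aeval (MvPolynomial.X 0 : MvPolynomial (Fin 2) R) Q * MvPolynomial.X 1 +
        (1 - MvPolynomial.C b * MvPolynomial.X 0 ^ 2 * MvPolynomial.X 1) *
          (1 - MvPolynomial.X 1))
    (w : M) (hw : aeval x Q (y w) = 0) :
    Q.eval c * ev w = ev ((1 - (b * c ^ 2) • y') ((1 - y) w)) := by
  have hx2y : x ^ 2 * y = (x * y) ^ 2 * y' := by
    rw [hxy.mul_pow, mul_assoc, sq y, mul_assoc, hyy', mul_one]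
  have hev2 : ∀ w, ev (((x * y) ^ 2) w) = c ^ 2 * ev w := by
    intro w; rw [sq, Module.End.mul_apply, hev, hev]; ring
  calc Q.eval c * ev w
      = ev (aeval (x * y) Q w) := by
        rw [ev.apply_aeval_of_apply_eq_smul _ _ hev, smul_eq_mul]
    _ = ev ((1 - algebraMap R _ b * x ^ 2 * y : Module.End R M) ((1 - y) w)) := by
        rw [hxy.aeval_mul_of_bivariate_identity Q b hQ]
        simp only [LinearMap.add_apply, Module.End.mul_apply, hw, zero_add]
    _ = ev ((1 - (b * c ^ 2) • y') ((1 - y) w)) := by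
        rw [mul_assoc, hx2y]
        simp only [LinearMap.sub_apply, Module.End.one_apply, map_sub, Module.End.mul_apply,
          Module.algebraMap_end_apply, LinearMap.smul_apply, map_smul, hev2, smul_eq_mul]
        ring

theorem stmt_9_general {L : Type*} [Field L] (p b : L)
    {V₁ V₂ : Type*} [AddCommGroup V₁] [Module L V₁] [AddCommGroup V₂] [Module L V₂]
    (Φ₁ : (Module.End L V₁)ˣ) (Φ₂ : (Module.End L V₂)ˣ)
    (Φ : (Module.End L (TensorProduct L V₁ V₂))ˣ)
    (hΦ : (Φ : Module.End L (TensorProduct L V₁ V₂)) =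
      TensorProduct.map (Φ₁ : Module.End L V₁) (Φ₂ : Module.End L V₂))
    (ev : TensorProduct L V₁ V₂ →ₗ[L] L)
    (hev : ∀ v, ev ((Φ : Module.End L (TensorProduct L V₁ V₂)) v) = p⁻¹ * ev v)
    (P1j : Polynomial L)
    (hid : Polynomial.aeval (MvPolynomial.X 0 * MvPolynomial.X 1 : MvPolynomial (Fin 2) L) P1j =
      Polynomial.aeval (MvPolynomial.X 0 : MvPolynomial (Fin 2) L) P1j * MvPolynomial.X 1 +
        (1 - MvPolynomial.C b * MvPolynomial.X 0 ^ 2 * MvPolynomial.X 1) *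
          (1 - MvPolynomial.X 1))
    (ξ : V₁) (ζ : V₂)
    (hξ : (Polynomial.aeval (Φ₁ : Module.End L V₁) P1j) ξ = 0)
    (hval : P1j.eval p⁻¹ ≠ 0) :
    ev (ξ ⊗ₜ[L] ζ) =
      (P1j.eval p⁻¹)⁻¹ *
        ev (ξ ⊗ₜ[L]
          (((1 : Module.End L V₂) - (b / p ^ 2) • ((Φ₂⁻¹ : (Module.End L V₂)ˣ) : Module.End L V₂))
            (((1 : Module.End L V₂) - (Φ₂ : Module.End L V₂)) ζ))) := by
  set x : Module.End L (V₁ ⊗[L] V₂) := LinearMap.rTensor V₂ (Φ₁ : Module.End L V₁)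
  set y : Module.End L (V₁ ⊗[L] V₂) := LinearMap.lTensor V₁ (Φ₂ : Module.End L V₂)
  set y' : Module.End L (V₁ ⊗[L] V₂) :=
    LinearMap.lTensor V₁ ((Φ₂⁻¹ : (Module.End L V₂)ˣ) : Module.End L V₂)
  have hxy : x * y = Φ := by
    rw [hΦ, Module.End.mul_eq_comp, LinearMap.rTensor_comp_lTensor]
  have hcomm : Commute x y := by
    rw [Commute, SemiconjBy, hxy, Module.End.mul_eq_comp, LinearMap.lTensor_comp_rTensor, hΦ]
  have hyy' : y * y' = 1 := by
    change Module.End.lTensorAlgHom L V₂ V₁ Φ₂ * Module.End.lTensorAlgHom L V₂ V₁ ↑Φ₂⁻¹ = 1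
    rw [← map_mul, Units.mul_inv, map_one]
  have hxP : aeval x P1j (y (ξ ⊗ₜ ζ)) = 0 := by
    change aeval (Module.End.rTensorAlgHom L V₁ V₂ Φ₁) P1j _ = 0
    rw [aeval_algHom_apply]
    change LinearMap.rTensor V₂ _ (ξ ⊗ₜ (Φ₂ : Module.End L V₂) ζ) = 0
    rw [LinearMap.rTensor_tmul, hξ, TensorProduct.zero_tmul]
  rw [eq_inv_mul_iff_mul_eq₀ hval,
    ev.eval_mul_apply_of_bivariate_identity hcomm hyy' p⁻¹ (hxy ▸ hev) P1j b hid _ hxP,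
    inv_pow, ← div_eq_mul_inv]
  simp [y, y', TensorProduct.tmul_sub, TensorProduct.tmul_smul]

/-- abstraction of Lemma 5.37, Step 1 of the Asai regulator formula.
Suppose `P(0) ≠ 0`, `P_{1+j}(T) = P(p^{1+j}T)` satisfies the identity
`P_{1+j}(xy) = P_{1+j}(x)·y + (1 - b·x²y)(1 - y)` in `L[x,y]`, the pairing `ev` on
`V₁ ⊗ V₂` intertwines `φ ⊗ φ` with multiplication by `p⁻¹` (both `φ`'s invertible),
`P_{1+j}(φ)ξ = 0` and `P_{1+j}(p⁻¹) ≠ 0`.  Then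
`ev(ξ ⊗ ζ) = P_{1+j}(p⁻¹)⁻¹ · ev(ξ ⊗ (1 - (b/p²)φ⁻¹)(1 - φ)ζ)`. -/
theorem stmt_9 {L : Type*} [Field L] (p b : L) (hp : p ≠ 0) (j : ℕ)
    (P : Polynomial L) (hP0 : P.coeff 0 ≠ 0)
    {V₁ V₂ : Type*} [AddCommGroup V₁] [Module L V₁] [AddCommGroup V₂] [Module L V₂]
    [FiniteDimensional L V₁] [FiniteDimensional L V₂]
    (Φ₁ : (Module.End L V₁)ˣ) (Φ₂ : (Module.End L V₂)ˣ)
    (Φ : (Module.End L (TensorProduct L V₁ V₂))ˣ)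
    (hΦ : (Φ : Module.End L (TensorProduct L V₁ V₂)) =
      TensorProduct.map (Φ₁ : Module.End L V₁) (Φ₂ : Module.End L V₂))
    (ev : TensorProduct L V₁ V₂ →ₗ[L] L)
    (hev : ∀ v, ev ((Φ : Module.End L (TensorProduct L V₁ V₂)) v) = p⁻¹ * ev v)
    (P1j : Polynomial L) (hP1j : P1j = P.comp (Polynomial.C (p ^ (1 + j)) * Polynomial.X))
    (hid : Polynomial.aeval (MvPolynomial.X 0 * MvPolynomial.X 1 : MvPolynomial (Fin 2) L) P1j =
      Polynomial.aeval (MvPolynomial.X 0 : MvPolynomial (Fin 2) L) P1j * MvPolynomial.X 1 +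
        (1 - MvPolynomial.C b * MvPolynomial.X 0 ^ 2 * MvPolynomial.X 1) *
          (1 - MvPolynomial.X 1))
    (ξ : V₁) (ζ : V₂)
    (hξ : (Polynomial.aeval (Φ₁ : Module.End L V₁) P1j) ξ = 0)
    (hval : P1j.eval p⁻¹ ≠ 0) :
    ev (ξ ⊗ₜ[L] ζ) =
      (P1j.eval p⁻¹)⁻¹ *
        ev (ξ ⊗ₜ[L]
          (((1 : Module.End L V₂) - (b / p ^ 2) • ((Φ₂⁻¹ : (Module.End L V₂)ˣ) : Module.End L V₂))
            (((1 : Module.End L V₂) - (Φ₂ : Module.End L V₂)) ζ))) :=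
  stmt_9_general p b Φ₁ Φ₂ Φ hΦ ev hev P1j hid ξ ζ hξ hval
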